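/- Let ℓ be a loss satisfying the triangle inequality, h_S* a minimizer of R_{P_S}(·, f_S) over ℋ, and h_T* a minimizer of R_{P_T}(·, f_T) over ℋ. Then for any h ∈ ℋ, R_{P_T}(h, f_T) − R_{P_T}(h_T*, f_T) ≤ R_{P_S}(h, h_S*) + R_{P_T}(h_S*, h_T*) + S_ℋ(P_T, P_S), where S_ℋ(P_T,P_S) = sup_{g∈ℋ} |R_{P_T}(g, h_S*) − R_{P_S}(g, h_S*)| is the source-guided discrepancy. -/
import Mathlib


open MeasureTheory

/-- Expected risk. -/
noncomputable def risk {X : Type*} [MeasurableSpace X] (P : Measure X)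
    (ℓ : ℝ → ℝ → ℝ) (h h' : X → ℝ) : ℝ :=
  ∫ x, ℓ (h x) (h' x) ∂P

/-- Source-guided discrepancy `S_ℋ(P_T, P_S)` relative to the source risk minimizer. -/
noncomputable def Sdisc {X : Type*} [MeasurableSpace X] (PT PS : Measure X)
    (ℓ : ℝ → ℝ → ℝ) (H : Set (X → ℝ)) (hS : X → ℝ) : ℝ :=
  sSup {d : ℝ | ∃ g ∈ H, d = |risk PT ℓ g hS - risk PS ℓ g hS|}

/-- inequality (2): generalization bound via S-disc. -/
theorem sdisc_generalization_bound {X : Type*} [MeasurableSpace X]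
    (PT PS : Measure X) [IsProbabilityMeasure PT] [IsProbabilityMeasure PS]
    (ℓ : ℝ → ℝ → ℝ) (hnn : ∀ a b, 0 ≤ ℓ a b)
    (htri : ∀ a b c, ℓ a c ≤ ℓ a b + ℓ b c)
    (H : Set (X → ℝ)) (fS fT : X → ℝ)
    (hS hT : X → ℝ) (hSmem : hS ∈ H) (hTmem : hT ∈ H)
    (hSmin : ∀ u ∈ H, risk PS ℓ hS fS ≤ risk PS ℓ u fS)
    (hTmin : ∀ u ∈ H, risk PT ℓ hT fT ≤ risk PT ℓ u fT)
    (hbdd : BddAbove {d : ℝ | ∃ g ∈ H, d = |risk PT ℓ g hS - risk PS ℓ g hS|})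
    (I1 : ∀ u ∈ H, Integrable (fun x => ℓ (u x) (fT x)) PT)
    (I2 : ∀ g ∈ H, Integrable (fun x => ℓ (g x) (hS x)) PT ∧
            Integrable (fun x => ℓ (g x) (hS x)) PS)
    (I3 : Integrable (fun x => ℓ (hS x) (hT x)) PT)
    (h : X → ℝ) (hmem : h ∈ H) :
    risk PT ℓ h fT - risk PT ℓ hT fT ≤
      risk PS ℓ h hS + risk PT ℓ hS hT + Sdisc PT PS ℓ H hS := by
  have key : risk PT ℓ h fT ≤
      risk PT ℓ h hS + risk PT ℓ hS hT + risk PT ℓ hT fT := by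
    have hint : Integrable
        (fun x => ℓ (h x) (hS x) + ℓ (hS x) (hT x) + ℓ (hT x) (fT x)) PT :=
      (((I2 h hmem).1.add I3).add (I1 hT hTmem))
    have hmono : risk PT ℓ h fT ≤
        ∫ x, (ℓ (h x) (hS x) + ℓ (hS x) (hT x) + ℓ (hT x) (fT x)) ∂PT := by
      refine integral_mono (I1 h hmem) hint fun x => ?_
      calc ℓ (h x) (fT x) ≤ ℓ (h x) (hT x) + ℓ (hT x) (fT x) := htri _ _ _
        _ ≤ (ℓ (h x) (hS x) + ℓ (hS x) (hT x)) + ℓ (hT x) (fT x) := by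
            gcongr; exact htri _ _ _
    calc risk PT ℓ h fT ≤ _ := hmono
      _ = risk PT ℓ h hS + risk PT ℓ hS hT + risk PT ℓ hT fT := by
        have e1 : ∫ x, ((ℓ (h x) (hS x) + ℓ (hS x) (hT x)) + ℓ (hT x) (fT x)) ∂PT
            = (∫ x, (ℓ (h x) (hS x) + ℓ (hS x) (hT x)) ∂PT)
              + ∫ x, ℓ (hT x) (fT x) ∂PT :=
          integral_add ((I2 h hmem).1.add I3) (I1 hT hTmem)
        have e2 : ∫ x, (ℓ (h x) (hS x) + ℓ (hS x) (hT x)) ∂PT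
            = (∫ x, ℓ (h x) (hS x) ∂PT) + ∫ x, ℓ (hS x) (hT x) ∂PT :=
          integral_add (I2 h hmem).1 I3
        simp only [risk]
        rw [e1, e2]
  have hsd : risk PT ℓ h hS ≤ risk PS ℓ h hS + Sdisc PT PS ℓ H hS := by
    have : |risk PT ℓ h hS - risk PS ℓ h hS| ≤ Sdisc PT PS ℓ H hS :=
      le_csSup hbdd ⟨h, hmem, rfl⟩
    have := (abs_le.mp this).2
    linarith
  linarith
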